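/- Suppose w_e|_{K_{i(e)}} is uniformly continuous for every e ∈ E. Then the pushforward F(M) of M under the coding map F is an invariant measure, i.e. F(M) ∈ P(M), for every equilibrium state M ∈ E(M). -/

import Mathlib

open MeasureTheory Filter Topology
open scoped ENNReal NNReal Classical

noncomputable section

/-- A countable Markov system `(K_{i(e)}, w_e, p_e)_{e ∈ E}` on a metric space `K`:
a partition `(K_j)_{j ∈ N}` of `K` into nonempty Borel sets, source and target maps
`i, t : E → N` (`i` surjective), and for each `e ∈ E` Borel maps `w_e` and probability
functions `p_e` (extended by zero outside `K_{i(e)}`) with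
`∑_{e, i(e)=j} p_e(y) = 1` for `y ∈ K_j`. -/
structure MarkovSystem (K : Type*) [MetricSpace K] [MeasurableSpace K]
    (N : Type*) (E : Type*) where
  Kset : N → Set K
  Kset_nonempty : ∀ j, (Kset j).Nonempty
  Kset_measurable : ∀ j, MeasurableSet (Kset j)
  Kset_disjoint : Pairwise (Function.onFun Disjoint Kset)
  Kset_cover : (⋃ j, Kset j) = Set.univ
  i : E → N
  t : E → N
  i_surj : Function.Surjective i
  w : E → K → K
  p : E → K → ℝ
  w_measurable : ∀ e, Measurable (w e)
  p_measurable : ∀ e, Measurable (p e)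
  p_nonneg : ∀ e x, 0 ≤ p e x
  p_le_one : ∀ e x, p e x ≤ 1
  p_zero_outside : ∀ e x, x ∉ Kset (i e) → p e x = 0
  w_mapsTo : ∀ e, Set.MapsTo (w e) (Kset (i e)) (Kset (t e))
  p_pos_somewhere : ∀ e, ∃ x ∈ Kset (i e), 0 < p e x
  p_tsum_one : ∀ j, ∀ x ∈ Kset j, (∑' e : {e : E // i e = j}, p e.val x) = 1

/-- `Ē = E ∪ {∞}` (one-point compactification); with `E` countable its Borel σ-algebra
consists of all subsets. -/
instance optionMeasurableSpace (E : Type*) : MeasurableSpace (Option E) := ⊤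

/-- The code space `Σ̄ = Ē^ℤ`, carrying the product σ-algebra. -/
abbrev CodeSpace (E : Type*) : Type _ := ℤ → Option E

/-- The left shift `S` on the code space, `(Sσ)_{k-1} = σ_k`. -/
def shiftMap (E : Type*) : CodeSpace E → CodeSpace E := fun σ k => σ (k + 1)

/-- The cylinder set `_m[es₀, …, es_{n}] = {σ : σ_{m+k} = es_k}`. -/
def cylSetL {E : Type*} (m : ℤ) (es : List (Option E)) : Set (CodeSpace E) :=
  {σ | ∀ (k : ℕ) (h : k < es.length), σ (m + (k : ℤ)) = es.get ⟨k, h⟩}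

/-- The σ-algebra `𝓕` generated by the cylinder sets `_m[e_m, …, e_0]`, `m ≤ 0`. -/
def pastAlgebra (E : Type*) : MeasurableSpace (CodeSpace E) :=
  MeasurableSpace.generateFrom
    {A | ∃ es : List (Option E), es ≠ [] ∧ A = cylSetL (1 - (es.length : ℤ)) es}

/-- The conditional entropy `h_S(Λ) = H_Λ((_1[e])_{e ∈ Ē} | 𝓕)`. -/
def entropyS {E : Type*} (Λ : Measure (CodeSpace E)) : ℝ≥0∞ :=
  ∑' eo : Option E,
    ∫⁻ σ, ENNReal.ofReal
        (Real.negMulLog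
          ((Λ[Set.indicator {τ : CodeSpace E | τ 1 = eo} (fun _ => (1 : ℝ)) | pastAlgebra E]) σ)) ∂Λ

namespace MarkovSystem

variable {K : Type*} [MetricSpace K] [MeasurableSpace K] {N E : Type*}

/-- The Markov operator `Uf = ∑_e p_e · (f ∘ w_e)` acting on nonnegative Borel functions. -/
def markovOp (M : MarkovSystem K N E) (f : K → ℝ≥0∞) : K → ℝ≥0∞ :=
  fun x => ∑' e : E, ENNReal.ofReal (M.p e x) * f (M.w e x)

/-- The adjoint operator `U*` acting on measures, `(U*ν)(B) = ∫ U(1_B) dν`. -/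
def adjOp (M : MarkovSystem K N E) (ν : Measure K) : Measure K :=
  Measure.sum fun e : E =>
    Measure.map (M.w e) (ν.withDensity fun x => ENNReal.ofReal (M.p e x))

/-- `μ ∈ P(M)`: `μ` is an invariant Borel probability measure, `U*μ = μ`. -/
def IsInvariantMeasure (M : MarkovSystem K N E) (μ : Measure K) : Prop :=
  IsProbabilityMeasure μ ∧ M.adjOp μ = μ

/-- The path space `Σ_G`: all coordinates lie in `E` and `i(σ_{n+1}) = t(σ_n)`. -/
def pathSpace (M : MarkovSystem K N E) : Set (CodeSpace E) :=
  {σ | ∀ n : ℤ, ∃ e e' : E, σ n = some e ∧ σ (n + 1) = some e' ∧ M.i e' = M.t e}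

/-- `T_j = {σ ∈ Σ_G : t(σ_0) = j}`. -/
def Tset (M : MarkovSystem K N E) (j : N) : Set (CodeSpace E) :=
  {σ | σ ∈ M.pathSpace ∧ ∃ e : E, σ 0 = some e ∧ M.t e = j}

/-- `w` extended to `Ē`, with `w_∞ = id`. -/
def wext (M : MarkovSystem K N E) : Option E → K → K := fun o => o.elim id M.w

/-- `p` extended to `Ē`, with `p_∞ = 0`. -/
def pext (M : MarkovSystem K N E) : Option E → K → ℝ := fun o => o.elim (fun _ => 0) M.p

/-- `i` extended to `Ē`, with `i(∞) = j₀`. -/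
def iext (M : MarkovSystem K N E) (j0 : N) : Option E → N := fun o => o.elim j0 M.i

/-- `t` extended to `Ē`, with `t(∞) = j₀`. -/
def text (M : MarkovSystem K N E) (j0 : N) : Option E → N := fun o => o.elim j0 M.t

/-- `iterW M σ n y = w_{σ_0} ∘ w_{σ_{-1}} ∘ ⋯ ∘ w_{σ_{-n}} (y)`. -/
def iterW (M : MarkovSystem K N E) (σ : CodeSpace E) : ℕ → K → K
  | 0, y => M.wext (σ 0) y
  | n + 1, y => M.iterW σ n (M.wext (σ (-(n + 1 : ℤ))) y)

/-- `orbit M j0 xp σ n = w_{σ_0} ∘ ⋯ ∘ w_{σ_{-n}} (x_{i(σ_{-n})})`. -/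
def orbit (M : MarkovSystem K N E) (j0 : N) (xp : N → K) (σ : CodeSpace E) (n : ℕ) : K :=
  M.iterW σ n (xp (M.iext j0 (σ (-(n : ℤ)))))

/-- `D`: the set of `σ ∈ Σ_G` for which `lim_{m → -∞} w_{σ_0} ∘ ⋯ ∘ w_{σ_m}(x_{i(σ_m)})` exists. -/
def codeDomain (M : MarkovSystem K N E) (j0 : N) (xp : N → K) : Set (CodeSpace E) :=
  {σ | σ ∈ M.pathSpace ∧ ∃ l : K, Tendsto (fun n : ℕ => M.orbit j0 xp σ n) atTop (𝓝 l)}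

/-- The coding map `F`: the above limit on `D`, and `x_{t(σ_0)}` elsewhere. -/
def code (M : MarkovSystem K N E) (j0 : N) (xp : N → K) (σ : CodeSpace E) : K :=
  if h : σ ∈ M.codeDomain j0 xp then h.2.choose else xp (M.text j0 (σ 0))

/-- `Λ ∈ E(M)`: `Λ` is a shift-invariant Borel probability measure with `Λ(D) = 1` and
`E_Λ(1_{_1[e]} | 𝓕) = p_e ∘ F` `Λ`-a.e. for every `e ∈ E` (an equilibrium state). -/
def IsEquilibrium (M : MarkovSystem K N E) (j0 : N) (xp : N → K)
    (Λ : Measure (CodeSpace E)) : Prop :=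
  IsProbabilityMeasure Λ ∧ Measure.map (shiftMap E) Λ = Λ ∧
    Λ (M.codeDomain j0 xp) = 1 ∧
    ∀ e : E,
      (Λ[Set.indicator {σ : CodeSpace E | σ 1 = some e} (fun _ => (1 : ℝ)) | pastAlgebra E])
        =ᵐ[Λ] fun σ => M.p e (M.code j0 xp σ)

/-- `pbar` is the family of continuous extensions `p̄_e` of `p_e|_{K_{i(e)}}` to the closure
of `K_{i(e)}`, extended further by zero on `K`. -/
def IsUCExtensionP (M : MarkovSystem K N E) (pbar : E → K → ℝ) : Prop :=
  ∀ e : E, ContinuousOn (pbar e) (closure (M.Kset (M.i e))) ∧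
    (∀ x ∈ M.Kset (M.i e), pbar e x = M.p e x) ∧
    (∀ x, x ∉ closure (M.Kset (M.i e)) → pbar e x = 0)

/-- `wb` is a family of continuous extensions `w̄_e` of `w_e|_{K_{i(e)}}` to the closure
of `K_{i(e)}`. -/
def IsUCExtensionW (M : MarkovSystem K N E) (wb : E → K → K) : Prop :=
  ∀ e : E, ContinuousOn (wb e) (closure (M.Kset (M.i e))) ∧
    (∀ x ∈ M.Kset (M.i e), wb e x = M.w e x)

/-- The Markov system is uniformly continuous: each `w_e|_{K_{i(e)}}` and `p_e|_{K_{i(e)}}`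
is uniformly continuous. -/
def IsUniformlyContinuous (M : MarkovSystem K N E) : Prop :=
  ∀ e : E, UniformContinuousOn (M.w e) (M.Kset (M.i e)) ∧
    UniformContinuousOn (M.p e) (M.Kset (M.i e))

/-- `∂p_e = p̄_e · 1_{cl(K_{i(e)}) \ K_{i(e)}}`. -/
def dp (M : MarkovSystem K N E) (pbar : E → K → ℝ) (e : E) : K → ℝ :=
  Set.indicator (closure (M.Kset (M.i e)) \ M.Kset (M.i e)) (pbar e)

/-- `Λ ∈ Ẽ(M)` (asymptotic state): shift-invariant probability with `Λ(D) = 1` and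
`E_Λ(1_{_1[e]} | 𝓕) = (p̄_e ∘ F)·1_{T_{i(e)}}` `Λ`-a.e. for every `e`. -/
def IsAsymptotic (M : MarkovSystem K N E) (j0 : N) (xp : N → K) (pbar : E → K → ℝ)
    (Λ : Measure (CodeSpace E)) : Prop :=
  IsProbabilityMeasure Λ ∧ Measure.map (shiftMap E) Λ = Λ ∧
    Λ (M.codeDomain j0 xp) = 1 ∧
    ∀ e : E,
      (Λ[Set.indicator {σ : CodeSpace E | σ 1 = some e} (fun _ => (1 : ℝ)) | pastAlgebra E])
        =ᵐ[Λ] Set.indicator (M.Tset (M.i e)) (fun σ => pbar e (M.code j0 xp σ))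

/-- `Λ ∈ E_⊥(M)`: shift-invariant probability with `Λ(D) = 1` and
`E_Λ(1_{_1[e]} | 𝓕) = (∂p_e ∘ F)·1_{T_{i(e)}}` `Λ`-a.e. for every `e`. -/
def IsPerp (M : MarkovSystem K N E) (j0 : N) (xp : N → K) (pbar : E → K → ℝ)
    (Λ : Measure (CodeSpace E)) : Prop :=
  IsProbabilityMeasure Λ ∧ Measure.map (shiftMap E) Λ = Λ ∧
    Λ (M.codeDomain j0 xp) = 1 ∧
    ∀ e : E,
      (Λ[Set.indicator {σ : CodeSpace E | σ 1 = some e} (fun _ => (1 : ℝ)) | pastAlgebra E])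
        =ᵐ[Λ] Set.indicator (M.Tset (M.i e)) (fun σ => M.dp pbar e (M.code j0 xp σ))

/-- `G = ⋃_{k ≥ 0} ⋃_{j ∈ N} S^{-k}(F^{-1}(K_j) ∩ T_j)`. -/
def Gset (M : MarkovSystem K N E) (j0 : N) (xp : N → K) : Set (CodeSpace E) :=
  ⋃ (k : ℕ) (j : N), (shiftMap E)^[k] ⁻¹' ((M.code j0 xp) ⁻¹' (M.Kset j) ∩ M.Tset j)

/-- `M` is non-degenerate: for every asymptotic state `Λ` there is `i ∈ N` with
`Λ(T_i ∩ F^{-1}(K_i)) > 0`. -/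
def IsNonDegenerate (M : MarkovSystem K N E) (j0 : N) (xp : N → K) (pbar : E → K → ℝ) : Prop :=
  ∀ Λ : Measure (CodeSpace E), M.IsAsymptotic j0 xp pbar Λ →
    ∃ i : N, 0 < Λ (M.Tset i ∩ (M.code j0 xp) ⁻¹' (M.Kset i))

/-- `M` is consistent: `F(Λ) ∈ P(M)` for every asymptotic state `Λ`. -/
def IsConsistent (M : MarkovSystem K N E) (j0 : N) (xp : N → K) (pbar : E → K → ℝ) : Prop :=
  ∀ Λ : Measure (CodeSpace E), M.IsAsymptotic j0 xp pbar Λ →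
    M.IsInvariantMeasure (Measure.map (M.code j0 xp) Λ)

/-- `Rf = ∑_e ∂p_e · (f ∘ w̄_e)`. -/
def Rop (M : MarkovSystem K N E) (pbar : E → K → ℝ) (wb : E → K → K)
    (f : K → ℝ≥0∞) : K → ℝ≥0∞ :=
  fun x => ∑' e : E, ENNReal.ofReal (M.dp pbar e x) * f (wb e x)

/-- `Ω = ⋂_{n ≥ 1} {R^n 1 ≥ 1}`. -/
def OmegaSet (M : MarkovSystem K N E) (pbar : E → K → ℝ) (wb : E → K → K) : Set K :=
  ⋂ n : ℕ, {x : K | 1 ≤ (M.Rop pbar wb)^[n + 1] (fun _ => 1) x}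

/-- `ξ_j = ∑_{e, i(e) = j} sup_{x ∈ K_j} p_e(x)`. -/
def xi (M : MarkovSystem K N E) (j : N) : ℝ≥0∞ :=
  ∑' e : {e : E // M.i e = j}, ⨆ x ∈ M.Kset j, ENNReal.ofReal (M.p e.val x)

/-- `M` has a dominating Markov chain: `ξ_j < ∞` for all `j ∈ N`. -/
def HasDominatingChain (M : MarkovSystem K N E) : Prop := ∀ j : N, M.xi j ≠ ⊤

/-- `ξ_j · q_{j j'} = ∑_{e, i(e) = j, t(e) = j'} sup_{x ∈ K_j} p_e(x)`. -/
def xiq (M : MarkovSystem K N E) (j j' : N) : ℝ≥0∞ :=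
  ∑' e : {e : E // M.i e = j ∧ M.t e = j'}, ⨆ x ∈ M.Kset j, ENNReal.ofReal (M.p e.val x)

/-- `c = ∑_{j'} sup_j ξ_j q_{j j'}`. -/
def cConst (M : MarkovSystem K N E) : ℝ≥0∞ := ∑' j' : N, ⨆ j : N, M.xiq j j'

/-- `α^{x_0}_n({j}) = (1/n) ∑_{k=1}^n ((U*)^k δ_{x_0})(K_j)`. -/
def alphaMeas (M : MarkovSystem K N E) (x0 : K) (n : ℕ) (j : N) : ℝ≥0∞ :=
  (n : ℝ≥0∞)⁻¹ * ∑ k ∈ Finset.range n, (M.adjOp^[k + 1] (Measure.dirac x0)) (M.Kset j)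

/-- Condition (T) at `x_0`: the sequence `(α^{x_0}_n)_n` is uniformly tight. -/
def ConditionT (M : MarkovSystem K N E) (x0 : K) : Prop :=
  ∀ ε : ℝ, 0 < ε → ∃ V : Finset N,
    ∀ n : ℕ, (∑' j : {j : N // j ∉ V}, M.alphaMeas x0 (n + 1) j.val) < ENNReal.ofReal ε

/-- `M` is contractive with contraction rate `a`:
`∑_{e, i(e) = j} p_e(x) d(w_e x, w_e y) ≤ a·d(x, y)` on each `K_j`. -/
def IsContractive (M : MarkovSystem K N E) (a : ℝ) : Prop :=
  ∀ j : N, ∀ x ∈ M.Kset j, ∀ y ∈ M.Kset j,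
    (∑' e : {e : E // M.i e = j},
        ENNReal.ofReal (M.p e.val x * dist (M.w e.val x) (M.w e.val y)))
      ≤ ENNReal.ofReal (a * dist x y)

/-- `L(x) = ∑_j d(x, x_j)·1_{K_j}(x)`. -/
def Lfun (M : MarkovSystem K N E) (xp : N → K) : K → ℝ≥0∞ :=
  fun x => ∑' j : N, Set.indicator (M.Kset j) (fun y => ENNReal.ofReal (dist y (xp j))) x

/-- `b = sup_j sup_{x ∈ K_j} ∑_{e, i(e) = j} p_e(x)·d(w_e(x_{i(e)}), x_{t(e)})`. -/
def bConst (M : MarkovSystem K N E) (xp : N → K) : ℝ≥0∞ :=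
  ⨆ j : N, ⨆ x ∈ M.Kset j,
    ∑' e : {e : E // M.i e = j},
      ENNReal.ofReal (M.p e.val x * dist (M.w e.val (xp (M.i e.val))) (xp (M.t e.val)))

/-- `P^m_x` evaluated on a word: `p_{e_0}(x)·p_{e_1}(w_{e_0}x)·⋯`. -/
def wordProb (M : MarkovSystem K N E) : List (Option E) → K → ℝ
  | [], _ => 1
  | o :: rest, x => M.pext o x * M.wordProb rest (M.wext o x)

/-- `Λ = Φ(μ)`: `Λ` is a shift-invariant Borel probability measure with
`Λ(_m[e_m, …, e_n]) = ∫ P^m_x(_m[e_m, …, e_n]) dμ(x)` for all cylinders with `m ≤ 0`. -/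
def IsPhiOf (M : MarkovSystem K N E) (μ : Measure K) (Λ : Measure (CodeSpace E)) : Prop :=
  IsProbabilityMeasure Λ ∧ Measure.map (shiftMap E) Λ = Λ ∧
    ∀ m : ℤ, m ≤ 0 → ∀ es : List (Option E),
      Λ (cylSetL m es) = ∫⁻ x, ENNReal.ofReal (M.wordProb es x) ∂μ

/-- The (negative of the) energy function: `-u(σ) = -log p_{σ_1}(F(σ))` on `D`
(`+∞` if `p_{σ_1}(F(σ)) = 0`) and `+∞` off `D`, valued in `[0, ∞]`. -/
def negEnergy (M : MarkovSystem K N E) (j0 : N) (xp : N → K) (σ : CodeSpace E) : ℝ≥0∞ :=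
  if σ ∈ M.codeDomain j0 xp then
    (σ 1).elim ⊤ fun e =>
      if M.p e (M.code j0 xp σ) = 0 then ⊤
      else ENNReal.ofReal (-Real.log (M.p e (M.code j0 xp σ)))
  else ⊤

/-- The free energy `h_S(Λ) + ∫ u dΛ`, as an extended real number. -/
def freeEnergy (M : MarkovSystem K N E) (j0 : N) (xp : N → K)
    (Λ : Measure (CodeSpace E)) : EReal :=
  (entropyS Λ : EReal) - ((∫⁻ σ, M.negEnergy j0 xp σ ∂Λ : ℝ≥0∞) : EReal)

/-- `Λ₀ ∈ E(u)`: `Λ₀` is a thermodynamic equilibrium state for the energy function `u`. -/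
def IsEquilibriumForU (M : MarkovSystem K N E) (j0 : N) (xp : N → K)
    (Λ0 : Measure (CodeSpace E)) : Prop :=
  IsProbabilityMeasure Λ0 ∧ Measure.map (shiftMap E) Λ0 = Λ0 ∧ entropyS Λ0 ≠ ⊤ ∧
    M.freeEnergy j0 xp Λ0 =
      sSup {r : EReal | ∃ Λ : Measure (CodeSpace E),
        IsProbabilityMeasure Λ ∧ Measure.map (shiftMap E) Λ = Λ ∧ entropyS Λ ≠ ⊤ ∧
          r = M.freeEnergy j0 xp Λ}

end MarkovSystem

end


variable {K : Type*} [MetricSpace K] [CompleteSpace K] [MeasurableSpace K] [BorelSpace K]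
  {N E : Type*} [Countable N] [Countable E]

/-! The coding map `F` is `Λ`-a.e. equal to the limit `F'` of the orbits
`w_{σ_0} ∘ ⋯ ∘ w_{σ_{-n}} (x_{i(σ_{-n})})` taken wherever it exists; each orbit point depends only
on finitely many past coordinates, so `F'` is `𝓕`-measurable. For a Borel set `B`, conditioning on
`𝓕` turns `(U* F(Λ))(B) = ∑_e ∫ 1_B(w_e F) p_e(F) dΛ` into `∑_e Λ(w_e F ∈ B, σ_1 = e)`. Since `p_e`
vanishes off `K_{i(e)}`, a.e. `F(σ) ∈ K_{i(σ_1)}`, where `w_{σ_1}` is continuous and hence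
`F(Sσ) = w_{σ_1}(F(σ))`. The sum is therefore `Λ(S⁻¹ F⁻¹ B) = Λ(F⁻¹ B)` by shift invariance. -/

instance optionDiscreteMeasurableSpace (E : Type*) : DiscreteMeasurableSpace (Option E) :=
  ⟨fun _ => trivial⟩

section CodeSpace

variable {E : Type*}

theorem measurable_shiftMap : Measurable (shiftMap E) :=
  measurable_pi_lambda _ fun k => measurable_pi_apply (k + 1)

theorem measurableSet_coord_eq (k : ℤ) (o : Option E) :
    MeasurableSet {σ : CodeSpace E | σ k = o} :=
  (measurableSet_singleton o).preimage (measurable_pi_apply k)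

theorem measurableSet_cylSetL (m : ℤ) (es : List (Option E)) : MeasurableSet (cylSetL m es) := by
  simp only [cylSetL, Set.ofPred_forall]
  exact .iInter fun k => .iInter fun _ => measurableSet_coord_eq _ _

theorem pastAlgebra_le : pastAlgebra E ≤ MeasurableSpace.pi :=
  MeasurableSpace.generateFrom_le fun _ ⟨es, _, hA⟩ => hA ▸ measurableSet_cylSetL _ es

def pastWindow (n : ℕ) (σ : CodeSpace E) : Fin (n + 1) → Option E := fun j => σ (j - n)

theorem pastWindow_preimage_singleton (n : ℕ) (v : Fin (n + 1) → Option E) :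
    pastWindow n ⁻¹' {v} = cylSetL (-n) (List.ofFn v) := by
  ext σ
  simp only [Set.mem_preimage, Set.mem_singleton_iff, cylSetL, Set.mem_ofPred_eq,
    List.length_ofFn, List.get_ofFn, funext_iff, pastWindow, Fin.forall_iff]
  refine forall₂_congr fun k hk => ?_
  rw [neg_add_eq_sub]
  rfl

theorem eqOn_of_pastWindow_eq {n : ℕ} {σ τ : CodeSpace E} (h : pastWindow n σ = pastWindow n τ) :
    Set.EqOn σ τ (Set.Icc (-n) 0) := fun k ⟨hk₁, hk₂⟩ => by
  have h' := congrFun h ⟨(k + n).toNat, by omega⟩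
  simp only [pastWindow] at h'
  rwa [show ((k + n).toNat : ℤ) - n = k by omega] at h'

variable [Countable E]

theorem measurable_pastWindow (n : ℕ) : Measurable[pastAlgebra E] (pastWindow n) :=
  @measurable_to_countable' _ _ _ _ (pastAlgebra E) _ fun v => by
    rw [pastWindow_preimage_singleton]
    exact MeasurableSpace.measurableSet_generateFrom ⟨List.ofFn v, by simp, by simp⟩

theorem stronglyMeasurable_past_of_factorsThrough {X : Type*} [TopologicalSpace X]
    {g : CodeSpace E → X} (n : ℕ) (hg : g.FactorsThrough (pastWindow n)) :
    StronglyMeasurable[pastAlgebra E] g := by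
  rw [← hg.extend_comp fun _ => g fun _ => none]
  exact StronglyMeasurable.of_discrete.comp_measurable (measurable_pastWindow n)

end CodeSpace

theorem setLIntegral_ofReal_eq_measure_inter_of_condExp_indicator {Ω : Type*}
    {m m0 : MeasurableSpace Ω} {μ : Measure Ω} [IsFiniteMeasure μ] (hm : m ≤ m0) {S : Set Ω}
    (hS : MeasurableSet S) {g : Ω → ℝ} (hg : μ[S.indicator (fun _ => (1 : ℝ)) | m] =ᵐ[μ] g) {A : Set Ω}
    (hA : MeasurableSet[m] A) :
    ∫⁻ ω in A, ENNReal.ofReal (g ω) ∂μ = μ (A ∩ S) := by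
  have hg_nonneg : 0 ≤ᵐ[μ] g := by
    filter_upwards [condExp_nonneg (m := m)
      (.of_forall (Set.indicator_nonneg fun _ _ => zero_le_one' ℝ)), hg] with ω h hω
    rwa [← hω]
  rw [← ofReal_integral_eq_lintegral_ofReal (integrable_condExp.congr hg).integrableOn
      (ae_restrict_of_ae hg_nonneg), ← setIntegral_congr_ae (hm A hA) (hg.mono fun _ h _ => h),
    setIntegral_condExp hm ((integrable_const 1).indicator hS) hA,
    integral_indicator_const _ hS, smul_eq_mul, mul_one, measureReal_restrict_apply hS,
    Set.inter_comm, ofReal_measureReal]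

namespace MarkovSystem

variable {K : Type*} [MetricSpace K] [MeasurableSpace K] {N E : Type*} (M : MarkovSystem K N E)

theorem adjOp_apply (ν : Measure K) {B : Set K} (hB : MeasurableSet B) :
    M.adjOp ν B = ∑' e, ∫⁻ x in M.w e ⁻¹' B, ENNReal.ofReal (M.p e x) ∂ν := by
  simp only [adjOp, Measure.sum_apply _ hB, Measure.map_apply (M.w_measurable _) hB,
    withDensity_apply _ (M.w_measurable _ hB)]

theorem iterW_congr {σ τ : CodeSpace E} :
    ∀ {n : ℕ}, Set.EqOn σ τ (Set.Icc (-n) 0) → ∀ y, M.iterW σ n y = M.iterW τ n y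
  | 0, h, y => by simp only [iterW, h ⟨by simp, le_rfl⟩]
  | n + 1, h, y => by
    simp only [iterW]
    rw [h ⟨by simp, by omega⟩, iterW_congr (h.mono (Set.Icc_subset_Icc (by simp) le_rfl))]

theorem orbit_factorsThrough (j0 : N) (xp : N → K) (n : ℕ) :
    (fun σ => M.orbit j0 xp σ n).FactorsThrough (pastWindow n) := fun σ τ h => by
  have h := eqOn_of_pastWindow_eq h
  simp only [orbit, h ⟨le_rfl, by simp⟩]
  exact M.iterW_congr h _

theorem mapsTo_wext (j0 : N) (o : Option E) :
    Set.MapsTo (M.wext o) (M.Kset (M.iext j0 o)) (M.Kset (M.text j0 o)) := by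
  cases o with
  | none => exact Set.mapsTo_id _
  | some e => exact M.w_mapsTo e

theorem text_eq_iext_of_mem_pathSpace {σ : CodeSpace E} (hσ : σ ∈ M.pathSpace) (j0 : N) (k : ℤ) :
    M.text j0 (σ k) = M.iext j0 (σ (k + 1)) := by
  obtain ⟨e, e', he, he', hi⟩ := hσ k
  simp [text, iext, he, he', hi]

theorem iterW_mem {σ : CodeSpace E} (hσ : σ ∈ M.pathSpace) (j0 : N) :
    ∀ (n : ℕ) {y : K}, y ∈ M.Kset (M.iext j0 (σ (-n))) →
      M.iterW σ n y ∈ M.Kset (M.text j0 (σ 0))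
  | 0, _, hy => M.mapsTo_wext j0 _ (by simpa using hy)
  | n + 1, y, hy => iterW_mem hσ j0 n <| by
    have := M.text_eq_iext_of_mem_pathSpace hσ j0 (-(n + 1 : ℕ))
    rw [show (-(n + 1 : ℕ) + 1 : ℤ) = -n by omega] at this
    exact this ▸ M.mapsTo_wext j0 _ hy

theorem orbit_mem_Kset {xp : N → K} (hxp : ∀ j, xp j ∈ M.Kset j) {σ : CodeSpace E}
    (hσ : σ ∈ M.pathSpace) (j0 : N) (n : ℕ) :
    M.orbit j0 xp σ n ∈ M.Kset (M.iext j0 (σ 1)) := by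
  rw [← zero_add (1 : ℤ), ← M.text_eq_iext_of_mem_pathSpace hσ]
  exact M.iterW_mem hσ j0 n (hxp _)

theorem iterW_shiftMap_succ (σ : CodeSpace E) :
    ∀ (n : ℕ) (y : K), M.iterW (shiftMap E σ) (n + 1) y = M.wext (σ 1) (M.iterW σ n y)
  | 0, y => by simp [iterW, shiftMap]
  | n + 1, y => by
    rw [iterW, iterW_shiftMap_succ σ n, iterW, shiftMap]
    congr 3

theorem orbit_shiftMap_succ (j0 : N) (xp : N → K) (σ : CodeSpace E) (n : ℕ) :
    M.orbit j0 xp (shiftMap E σ) (n + 1) = M.wext (σ 1) (M.orbit j0 xp σ n) := by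
  rw [orbit, iterW_shiftMap_succ, orbit]
  simp [shiftMap]

theorem measurableSet_pathSpace [Countable E] : MeasurableSet M.pathSpace := by
  let edgePairs : Set (Option E × Option E) :=
    {p | ∃ e e' : E, p.1 = some e ∧ p.2 = some e' ∧ M.i e' = M.t e}
  have hpair (n : ℤ) : MeasurableSet ((fun σ : CodeSpace E => (σ n, σ (n + 1))) ⁻¹' edgePairs) :=
    (measurable_pi_apply n).prodMk (measurable_pi_apply (n + 1)) (.of_discrete)
  simp only [pathSpace, Set.ofPred_forall]
  exact .iInter hpair

variable (j0 : N) (xp : N → K)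

theorem measurableSet_codeDomain [CompleteSpace K] [Countable E] :
    MeasurableSet (M.codeDomain j0 xp) := by
  refine M.measurableSet_pathSpace.inter (pastAlgebra_le _ ?_)
  let _ := pastAlgebra E
  exact StronglyMeasurable.measurableSet_exists_tendsto fun n =>
    stronglyMeasurable_past_of_factorsThrough n (M.orbit_factorsThrough j0 xp n)

variable [Nonempty K]

/-- Unlike `code`, this does not test membership in `pathSpace`, which is what makes it
`pastAlgebra`-measurable. -/
noncomputable def limCode (σ : CodeSpace E) : K :=
  limUnder atTop (M.orbit j0 xp σ)

theorem code_eq_limCode {σ : CodeSpace E} (hσ : σ ∈ M.codeDomain j0 xp) :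
    M.code j0 xp σ = M.limCode j0 xp σ := by
  rw [code, dif_pos hσ]
  exact tendsto_nhds_unique hσ.2.choose_spec (tendsto_nhds_limUnder hσ.2)

theorem limCode_shiftMap (hxp : ∀ j, xp j ∈ M.Kset j) {σ : CodeSpace E}
    (hσ : σ ∈ M.codeDomain j0 xp) {e : E} (he : σ 1 = some e)
    (hw : ContinuousWithinAt (M.w e) (M.Kset (M.i e)) (M.limCode j0 xp σ)) :
    M.limCode j0 xp (shiftMap E σ) = M.w e (M.limCode j0 xp σ) := by
  have hlim : Tendsto (M.orbit j0 xp σ) atTop (𝓝[M.Kset (M.i e)] (M.limCode j0 xp σ)) :=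
    tendsto_nhdsWithin_iff.2 ⟨tendsto_nhds_limUnder hσ.2, .of_forall fun n => by
      simpa [he, iext] using M.orbit_mem_Kset hxp hσ.1 j0 n⟩
  have hshift : Tendsto (M.orbit j0 xp (shiftMap E σ)) atTop (𝓝 (M.w e (M.limCode j0 xp σ))) :=
    (tendsto_add_atTop_iff_nat 1).1 <| (hw.tendsto.comp hlim).congr fun n => by
      simp [orbit_shiftMap_succ, he, wext]
  exact hshift.limUnder_eq

variable [CompleteSpace K] [Countable E]

theorem stronglyMeasurable_past_limCode : StronglyMeasurable[pastAlgebra E] (M.limCode j0 xp) := by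
  let _ := pastAlgebra E
  exact StronglyMeasurable.limUnder fun n =>
    stronglyMeasurable_past_of_factorsThrough n (M.orbit_factorsThrough j0 xp n)

theorem measurable_limCode [BorelSpace K] : Measurable (M.limCode j0 xp) :=
  (M.stronglyMeasurable_past_limCode j0 xp).measurable.mono pastAlgebra_le le_rfl

end MarkovSystem

namespace MarkovSystem.IsEquilibrium

variable {K : Type*} [MetricSpace K] [CompleteSpace K] [MeasurableSpace K]
  {N E : Type*} [Countable E] {M : MarkovSystem K N E} {j0 : N} {xp : N → K}
  {Λ : Measure (CodeSpace E)}

theorem ae_mem_codeDomain (hΛ : M.IsEquilibrium j0 xp Λ) : ∀ᵐ σ ∂Λ, σ ∈ M.codeDomain j0 xp := by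
  have := hΛ.1
  exact mem_ae_iff.2 ((prob_compl_eq_zero_iff (M.measurableSet_codeDomain j0 xp)).2 hΛ.2.2.1)

variable [Nonempty K]

theorem code_ae_eq_limCode (hΛ : M.IsEquilibrium j0 xp Λ) : M.code j0 xp =ᵐ[Λ] M.limCode j0 xp :=
  hΛ.ae_mem_codeDomain.mono fun _ => M.code_eq_limCode j0 xp

theorem setLIntegral_p_limCode (hΛ : M.IsEquilibrium j0 xp Λ) {A : Set (CodeSpace E)}
    (hA : MeasurableSet[pastAlgebra E] A) (e : E) :
    ∫⁻ σ in A, ENNReal.ofReal (M.p e (M.limCode j0 xp σ)) ∂Λ = Λ (A ∩ {σ | σ 1 = some e}) := by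
  have := hΛ.1
  exact setLIntegral_ofReal_eq_measure_inter_of_condExp_indicator pastAlgebra_le
    (measurableSet_coord_eq 1 (some e))
    ((hΛ.2.2.2 e).trans (hΛ.code_ae_eq_limCode.fun_comp (M.p e))) hA

variable [BorelSpace K]

theorem ae_limCode_mem_Kset (hΛ : M.IsEquilibrium j0 xp Λ) :
    ∀ᵐ σ ∂Λ, ∀ e, σ 1 = some e → M.limCode j0 xp σ ∈ M.Kset (M.i e) := by
  refine ae_all_iff.2 fun e => ?_
  set A := M.limCode j0 xp ⁻¹' (M.Kset (M.i e))ᶜ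
  have hA : MeasurableSet[pastAlgebra E] A :=
    (M.stronglyMeasurable_past_limCode j0 xp).measurable (M.Kset_measurable _).compl
  have hnull : Λ (A ∩ {σ | σ 1 = some e}) = 0 := by
    rw [← hΛ.setLIntegral_p_limCode hA e, setLIntegral_congr_fun (pastAlgebra_le _ hA)
      fun σ hσ => by rw [M.p_zero_outside e _ hσ, ENNReal.ofReal_zero], lintegral_zero]
  filter_upwards [measure_eq_zero_iff_ae_notMem.1 hnull] with σ hσ he
  by_contra hK
  exact hσ ⟨hK, he⟩

theorem adjOp_map_limCode_apply (hΛ : M.IsEquilibrium j0 xp Λ) {B : Set K}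
    (hB : MeasurableSet B) :
    M.adjOp (Λ.map (M.limCode j0 xp)) B =
      Λ (⋃ e, M.limCode j0 xp ⁻¹' (M.w e ⁻¹' B) ∩ {σ | σ 1 = some e}) := by
  have hdisj : Pairwise (Function.onFun Disjoint fun e =>
      M.limCode j0 xp ⁻¹' (M.w e ⁻¹' B) ∩ {σ : CodeSpace E | σ 1 = some e}) :=
    fun e e' hne => Set.disjoint_left.2 fun σ h h' =>
      hne (Option.some_injective _ (h.2.symm.trans h'.2))
  rw [adjOp_apply _ _ hB, measure_iUnion hdisj fun e =>
    (M.measurable_limCode j0 xp (M.w_measurable e hB)).inter (measurableSet_coord_eq 1 _)]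
  refine tsum_congr fun e => ?_
  rw [setLIntegral_map (M.w_measurable e hB) (M.p_measurable e).ennreal_ofReal
    (M.measurable_limCode j0 xp)]
  exact hΛ.setLIntegral_p_limCode
    ((M.stronglyMeasurable_past_limCode j0 xp).measurable (M.w_measurable e hB)) e

theorem iUnion_ae_eq_preimage_shiftMap (hΛ : M.IsEquilibrium j0 xp Λ)
    (hxp : ∀ j, xp j ∈ M.Kset j) (hw : ∀ e, ContinuousOn (M.w e) (M.Kset (M.i e))) (B : Set K) :
    (⋃ e, M.limCode j0 xp ⁻¹' (M.w e ⁻¹' B) ∩ {σ | σ 1 = some e} : Set (CodeSpace E)) =ᵐ[Λ]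
      shiftMap E ⁻¹' (M.limCode j0 xp ⁻¹' B) := by
  refine eventuallyEq_set.2 ?_
  filter_upwards [hΛ.ae_mem_codeDomain, hΛ.ae_limCode_mem_Kset] with σ hσ hK
  obtain ⟨-, e, -, he, -⟩ := hσ.1 0
  rw [zero_add] at he
  have hshift := M.limCode_shiftMap j0 xp hxp hσ he ((hw e).continuousWithinAt (hK e he))
  simp [he, hshift]

end MarkovSystem.IsEquilibrium

/-- If each `w_e|_{K_{i(e)}}` is uniformly continuous, then `F(M) ∈ P(M)`
for every equilibrium state `M ∈ E(M)`. -/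
theorem pushforward_equilibrium_isInvariant
    (M : MarkovSystem K N E) (j0 : N) (xp : N → K) (hxp : ∀ j, xp j ∈ M.Kset j)
    (hw : ∀ e : E, UniformContinuousOn (M.w e) (M.Kset (M.i e)))
    (Λ : Measure (CodeSpace E)) (hΛ : M.IsEquilibrium j0 xp Λ) :
    M.IsInvariantMeasure (Measure.map (M.code j0 xp) Λ) := by
  have : Nonempty K := ⟨xp j0⟩
  have : IsProbabilityMeasure Λ := hΛ.1
  have hF := M.measurable_limCode j0 xp
  rw [Measure.map_congr hΛ.code_ae_eq_limCode]
  refine ⟨Measure.isProbabilityMeasure_map hF.aemeasurable, Measure.ext fun B hB => ?_⟩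
  rw [hΛ.adjOp_map_limCode_apply hB,
    measure_congr (hΛ.iUnion_ae_eq_preimage_shiftMap hxp (fun e => (hw e).continuousOn) B),
    ← Measure.map_apply measurable_shiftMap (hF hB), hΛ.2.1, Measure.map_apply hF hB]
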